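/- For every integer d ≥ 2 and every ℓ ∈ 𝔤_d* with z_1 = ℓ(Z_1) ≠ 0, the coadjoint orbit {ℓ + ad*_X ℓ : X ∈ 𝔤_d} of ℓ intersects the cross-section Σ_d = span(Z_1*, …, Z_d*, Y_2*, Y_4*, …, Y_{2d}*) in exactly one point, namely the functional P_d(ℓ) = Σ_{i=1}^{d} z_i Z_i* + Σ_{i=1}^{d−1} (y_{2i} − (z_{i+1}/z_1) y_{2i−1}) Y_{2i}* + (y_{2d} − ((z_2 + ⋯ + z_d)/z_1) y_{2d−1}) Y_{2d}*, where z_i = ℓ(Z_i) and y_j = ℓ(Y_j). -/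

import Mathlib

/-- The coadjoint action of the Lie algebra: `(coad X f) W = f ⁅W, X⁆`. -/
def coad {L : Type*} [LieRing L] [LieAlgebra ℝ L] (X : L) (f : Module.Dual ℝ L) :
    Module.Dual ℝ L where
  toFun W := f ⁅W, X⁆
  map_add' a b := by simp [add_lie]
  map_smul' c a := by simp [smul_lie]

/-- The set `{ad*_X ℓ : X ∈ 𝔤, ℓ ∈ 𝔤*}` of all coadjoint tangent vectors. -/
def adStar (L : Type*) [LieRing L] [LieAlgebra ℝ L] : Set (Module.Dual ℝ L) :=
  {g | ∃ (X : L) (ℓ : Module.Dual ℝ L), g = coad X ℓ}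

/-- Coordinates of a linear functional with respect to the dual basis of `B`;
this identifies `𝔤*` with `ι → ℝ`, carrying the canonical topology. -/
noncomputable def coords {ι : Type*} {L : Type*} [LieRing L] [LieAlgebra ℝ L]
    (B : Module.Basis ι ℝ L) (f : Module.Dual ℝ L) : ι → ℝ := fun a => f (B a)

/-- The cortex `Cor(𝔤*)`: the closure (in the canonical topology of the
finite-dimensional space `𝔤*`, transported to coordinates via the dual basis)
of the set `{ad*_X ℓ : X ∈ 𝔤, ℓ ∈ 𝔤*}`. -/
def corSet {ι : Type*} {L : Type*} [LieRing L] [LieAlgebra ℝ L] (B : Module.Basis ι ℝ L) :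
    Set (Module.Dual ℝ L) :=
  {f | coords B f ∈ closure (coords B '' adStar L)}

/-- Index type for the basis of `𝔤_d`: first component indexes `Z_1,…,Z_d`, the second
the odd `Y`'s `Y_1, Y_3, …, Y_{2d-1}`, the third the even `Y`'s `Y_2, Y_4, …, Y_{2d}`,
and the fourth `X_1,…,X_d`. -/
abbrev Idx (d : ℕ) : Type := Fin d ⊕ (Fin d ⊕ (Fin d ⊕ Fin d))

/-- Index of `Z_{i+1}`. -/
def zI {d : ℕ} (i : Fin d) : Idx d := Sum.inl i
/-- Index of `Y_{2i+1}` (odd-indexed `Y`). -/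
def yoI {d : ℕ} (i : Fin d) : Idx d := Sum.inr (Sum.inl i)
/-- Index of `Y_{2i+2}` (even-indexed `Y`). -/
def yeI {d : ℕ} (i : Fin d) : Idx d := Sum.inr (Sum.inr (Sum.inl i))
/-- Index of `X_{i+1}`. -/
def xI {d : ℕ} (i : Fin d) : Idx d := Sum.inr (Sum.inr (Sum.inr i))

/-- Value of `⁅X_{i+1}, Y_{2i+2}⁆`: `Z_{i+2}` if `i + 1 < d`, and `Z_2 + ⋯ + Z_d`
if `i + 1 = d`. -/
def gdW {d : ℕ} (hd : 2 ≤ d) {V : Type*} [AddCommGroup V] (B : Idx d → V) (i : Fin d) : V :=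
  if h : (i : ℕ) < d - 1 then B (zI ⟨(i : ℕ) + 1, by omega⟩)
  else ∑ m ∈ Finset.univ.filter (fun m : Fin d => 0 < (m : ℕ)), B (zI m)

/-- The bracket `⁅B a, B b⁆` of two basis vectors of `𝔤_d`, given by the structure
constants: `⁅X_i, Y_{2i-1}⁆ = Z_1` for `i = 1,…,d`, `⁅X_k, Y_{2k}⁆ = Z_{k+1}` for
`k = 1,…,d-1`, `⁅X_d, Y_{2d}⁆ = Z_2 + ⋯ + Z_d`, all other brackets of basis
vectors being zero (up to antisymmetry). -/
def gdBr {d : ℕ} (hd : 2 ≤ d) {V : Type*} [AddCommGroup V] (B : Idx d → V) :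
    Idx d → Idx d → V
  | Sum.inr (Sum.inr (Sum.inr i)), Sum.inr (Sum.inl j) =>
      if i = j then B (zI ⟨0, by omega⟩) else 0
  | Sum.inr (Sum.inl j), Sum.inr (Sum.inr (Sum.inr i)) =>
      if i = j then -(B (zI ⟨0, by omega⟩)) else 0
  | Sum.inr (Sum.inr (Sum.inr i)), Sum.inr (Sum.inr (Sum.inl j)) =>
      if i = j then gdW hd B i else 0
  | Sum.inr (Sum.inr (Sum.inl j)), Sum.inr (Sum.inr (Sum.inr i)) =>
      if i = j then -(gdW hd B i) else 0
  | _, _ => 0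

/-- The homogeneous polynomial `Q_d` of degree `d`, evaluated at the odd coordinates
`ηo` (`ηo i = η_{2i+1}`) and the even coordinates `ηe` (`ηe i = η_{2i+2}`):
`Q_d = η_{2d-1}·Σ_{i=1}^{d-1}(η_{2i}·∏_{j=1, j≠i}^{d-1} η_{2j-1})
      − η_{2d}·∏_{j=1}^{d-1} η_{2j-1}`. -/
def Qd (d : ℕ) (hd : 2 ≤ d) (ηo ηe : Fin d → ℝ) : ℝ :=
  ηo ⟨d - 1, by omega⟩ *
      (∑ i ∈ Finset.univ.filter (fun i : Fin d => (i : ℕ) < d - 1),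
        ηe i * ∏ j ∈ Finset.univ.filter (fun j : Fin d => (j : ℕ) < d - 1 ∧ j ≠ i), ηo j)
    - ηe ⟨d - 1, by omega⟩ *
        ∏ j ∈ Finset.univ.filter (fun j : Fin d => (j : ℕ) < d - 1), ηo j

/-! Since `⁅𝔤_d, 𝔤_d⁆ ⊆ 𝔷_d`, the functional `ad*_X ℓ` only involves the values of `ℓ` on the
centre. Writing `ξ_j, α_j, β_j` for the `X_j, Y_{2j-1}, Y_{2j}` coordinates of `X` and
`w_j = ℓ ⁅X_j, Y_{2j}⁆`, the functional `ℓ + ad*_X ℓ` agrees with `ℓ` on the centre and differs from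
it by `-ξ_j z_1` on `Y_{2j-1}`, by `-ξ_j w_j` on `Y_{2j}` and by `α_j z_1 + β_j w_j` on `X_j`.
Lying in `Σ_d` forces `ξ_j = y_{2j-1} / z_1`, which pins down the value on `Y_{2j}`; conversely
`ξ_j = y_{2j-1} / z_1`, `α_j = -x_j / z_1`, `β_j = 0` reaches `P_d(ℓ)`. -/

open Module

theorem coad_apply_basis {ι L : Type*} [Fintype ι] [LieRing L] [LieAlgebra ℝ L]
    (B : Basis ι ℝ L) (X : L) (ℓ : Dual ℝ L) (b : ι) :
    coad X ℓ (B b) = ∑ a, B.repr X a * ℓ ⁅B b, B a⁆ := by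
  change ℓ ⁅B b, X⁆ = _
  conv_lhs => rw [← B.sum_repr X, lie_sum, map_sum]
  simp only [lie_smul, map_smul, smul_eq_mul]

theorem apply_gdW {d : ℕ} (hd : 2 ≤ d) {L : Type*} [LieRing L] [LieAlgebra ℝ L]
    (B : Basis (Idx d) ℝ L) (ℓ : Dual ℝ L) (i : Fin d) :
    ℓ (gdW hd (fun c => B c) i) = gdW hd (coords B ℓ) i := by
  unfold gdW
  split_ifs <;> simp [map_sum, coords]

section CoadjointAction

variable {d : ℕ} (hd : 2 ≤ d) {L : Type*} [LieRing L] [LieAlgebra ℝ L]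
  (B : Basis (Idx d) ℝ L) (hbr : ∀ a b : Idx d, ⁅B a, B b⁆ = gdBr hd (fun c => B c) a b)
  (ℓ : Dual ℝ L) (X : L)
include hbr

theorem coad_apply_zI (k : Fin d) : coad X ℓ (B (zI k)) = 0 := by
  simp [coad_apply_basis, hbr, zI, gdBr]

theorem coad_apply_yoI (j : Fin d) :
    coad X ℓ (B (yoI j)) = -(B.repr X (xI j) * ℓ (B (zI ⟨0, by omega⟩))) := by
  simp [coad_apply_basis, hbr, Fintype.sum_sum_type, yoI, xI, gdBr, apply_ite]

theorem coad_apply_yeI (j : Fin d) :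
    coad X ℓ (B (yeI j)) = -(B.repr X (xI j) * gdW hd (coords B ℓ) j) := by
  simp [coad_apply_basis, hbr, Fintype.sum_sum_type, yeI, xI, gdBr, apply_ite, apply_gdW]

theorem coad_apply_xI (i : Fin d) :
    coad X ℓ (B (xI i)) =
      B.repr X (yoI i) * ℓ (B (zI ⟨0, by omega⟩)) + B.repr X (yeI i) * gdW hd (coords B ℓ) i := by
  simp [coad_apply_basis, hbr, Fintype.sum_sum_type, yoI, yeI, xI, gdBr, apply_ite, apply_gdW]

end CoadjointAction

theorem Module.Basis.eq_sum_smul_dualBasis_iff {ι R M : Type*} [Fintype ι] [DecidableEq ι]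
    [CommRing R] [AddCommGroup M] [Module R M] (B : Basis ι R M) (g : Dual R M) (c : ι → R) :
    g = ∑ a, c a • B.dualBasis a ↔ ∀ a, g (B a) = c a := by
  rw [B.dualBasis.ext_elem_iff, B.dualBasis.repr_sum_self]
  simp only [dualBasis_repr]

theorem Module.Basis.mem_span_dualBasis_image_iff {ι R M : Type*} [Finite ι] [DecidableEq ι]
    [CommRing R] [AddCommGroup M] [Module R M] (B : Basis ι R M) (s : Set ι) (g : Dual R M) :
    g ∈ Submodule.span R (B.dualBasis '' s) ↔ ∀ a ∉ s, g (B a) = 0 := by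
  rw [B.dualBasis.mem_span_image]
  simp only [Set.subset_def, Finset.mem_coe, Finsupp.mem_support_iff, dualBasis_repr]
  exact forall_congr' fun a => not_imp_comm

theorem mem_span_dualBasis_zI_yeI_iff {d : ℕ} {R M : Type*} [CommRing R] [AddCommGroup M]
    [Module R M] (B : Basis (Idx d) R M) (g : Dual R M) :
    g ∈ Submodule.span R ((Set.range fun i : Fin d => B.dualBasis (zI i)) ∪
        (Set.range fun i : Fin d => B.dualBasis (yeI i))) ↔
      ∀ i, g (B (yoI i)) = 0 ∧ g (B (xI i)) = 0 := by
  rw [Set.range_comp' B.dualBasis zI, Set.range_comp' B.dualBasis yeI, ← Set.image_union,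
    B.mem_span_dualBasis_image_iff]
  simp [zI, yoI, yeI, xI, forall_and]

-- The coordinates of `P_d(ℓ)` in the dual basis, as a function of the coordinates `v` of `ℓ`;
-- `gdW hd v j` is `ℓ ⁅X_j, Y_{2j}⁆`.
noncomputable def crossSectionCoords {d : ℕ} (hd : 2 ≤ d) (v : Idx d → ℝ) : Idx d → ℝ :=
  Sum.elim (fun i => v (zI i))
    (Sum.elim 0 (Sum.elim (fun j => v (yeI j) - gdW hd v j / v (zI ⟨0, by omega⟩) * v (yoI j)) 0))

theorem Fin.sum_dite_lt_pred_add {M : Type*} [AddCommMonoid M] {d : ℕ} (hd : 0 < d)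
    (f : Fin d → M) (g : (j : Fin d) → (j : ℕ) < d - 1 → M) (hg : ∀ j hj, g j hj = f j)
    (x : M) (hx : f ⟨d - 1, by omega⟩ = x) :
    (∑ j : Fin d, if hj : (j : ℕ) < d - 1 then g j hj else 0) + x = ∑ j, f j := by
  obtain ⟨n, rfl⟩ : ∃ n, d = n + 1 := ⟨d - 1, by omega⟩
  subst hx
  simp [Fin.sum_univ_castSucc, hg, Fin.last]

theorem sum_smul_dualBasis_crossSectionCoords {d : ℕ} (hd : 2 ≤ d) {L : Type*} [LieRing L]
    [LieAlgebra ℝ L] (B : Basis (Idx d) ℝ L) (ℓ : Dual ℝ L) :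
    ∑ a, crossSectionCoords hd (coords B ℓ) a • B.dualBasis a =
      ∑ i, ℓ (B (zI i)) • B.dualBasis (zI i) +
        ∑ j, crossSectionCoords hd (coords B ℓ) (yeI j) • B.dualBasis (yeI j) := by
  simp [Fintype.sum_sum_type, crossSectionCoords, coords, zI, yeI]

section CrossSection

variable {d : ℕ} (hd : 2 ≤ d) {L : Type*} [LieRing L] [LieAlgebra ℝ L]
  (B : Basis (Idx d) ℝ L) (hbr : ∀ a b : Idx d, ⁅B a, B b⁆ = gdBr hd (fun c => B c) a b)
  {ℓ : Dual ℝ L} (hℓ : ℓ (B (zI ⟨0, by omega⟩)) ≠ 0)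
include hbr hℓ

theorem add_coad_apply_eq_crossSectionCoords {X : L}
    (hX : ∀ i, (ℓ + coad X ℓ) (B (yoI i)) = 0 ∧ (ℓ + coad X ℓ) (B (xI i)) = 0) (a : Idx d) :
    (ℓ + coad X ℓ) (B a) = crossSectionCoords hd (coords B ℓ) a := by
  rcases a with k | k | k | k
  · change ℓ (B (zI k)) + coad X ℓ (B (zI k)) = ℓ (B (zI k))
    rw [coad_apply_zI hd B hbr, add_zero]
  · exact (hX k).1
  · change ℓ (B (yeI k)) + coad X ℓ (B (yeI k)) =
      ℓ (B (yeI k)) - gdW hd (coords B ℓ) k / ℓ (B (zI ⟨0, by omega⟩)) * ℓ (B (yoI k))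
    have hξ : ℓ (B (yoI k)) = B.repr X (xI k) * ℓ (B (zI ⟨0, by omega⟩)) := by
      have hyo := (hX k).1
      rw [LinearMap.add_apply, coad_apply_yoI hd B hbr] at hyo
      linarith
    rw [coad_apply_yeI hd B hbr, hξ]
    field_simp
    ring
  · exact (hX k).2

theorem exists_add_coad_apply_eq_crossSectionCoords :
    ∃ X : L, ∀ a, (ℓ + coad X ℓ) (B a) = crossSectionCoords hd (coords B ℓ) a := by
  set z₁ := ℓ (B (zI ⟨0, by omega⟩))
  let c : Idx d → ℝ := Sum.elim 0
    (Sum.elim (fun j => -ℓ (B (xI j)) / z₁) (Sum.elim 0 (fun j => ℓ (B (yoI j)) / z₁)))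
  refine ⟨∑ a, c a • B a, fun a => ?_⟩
  rcases a with k | k | k | k
  · change ℓ (B (zI k)) + coad _ ℓ (B (zI k)) = ℓ (B (zI k))
    rw [coad_apply_zI hd B hbr, add_zero]
  · change ℓ (B (yoI k)) + coad _ ℓ (B (yoI k)) = 0
    rw [coad_apply_yoI hd B hbr, B.repr_sum_self]
    simp only [c, xI, Sum.elim_inr]
    field_simp
    ring
  · change ℓ (B (yeI k)) + coad _ ℓ (B (yeI k)) =
      ℓ (B (yeI k)) - gdW hd (coords B ℓ) k / z₁ * ℓ (B (yoI k))
    rw [coad_apply_yeI hd B hbr, B.repr_sum_self]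
    simp only [c, xI, Sum.elim_inr]
    ring
  · change ℓ (B (xI k)) + coad _ ℓ (B (xI k)) = 0
    rw [coad_apply_xI hd B hbr, B.repr_sum_self]
    simp only [c, yoI, yeI, Sum.elim_inr, Sum.elim_inl, Pi.zero_apply, zero_mul, add_zero]
    field_simp
    ring

end CrossSection

/-- For every `d ≥ 2` and every `ℓ ∈ 𝔤_d*` with `z_1 = ℓ(Z_1) ≠ 0`, the
coadjoint orbit of `ℓ` meets the cross-section
`Σ_d = span(Z_1*,…,Z_d*, Y_2*, Y_4*, …, Y_{2d}*)` in exactly one point, namely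
`P_d(ℓ) = Σ_i z_i Z_i* + Σ_{i<d} (y_{2i} − (z_{i+1}/z_1) y_{2i−1}) Y_{2i}*
          + (y_{2d} − ((z_2+⋯+z_d)/z_1) y_{2d−1}) Y_{2d}*`. -/
theorem cross_section_gd (d : ℕ) (hd : 2 ≤ d) (L : Type) [LieRing L] [LieAlgebra ℝ L]
    (B : Module.Basis (Idx d) ℝ L)
    (hbr : ∀ a b : Idx d, ⁅B a, B b⁆ = gdBr hd (fun c => B c) a b)
    (ℓ : Module.Dual ℝ L) (hℓ : ℓ (B (zI ⟨0, by omega⟩)) ≠ 0) :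
    {g : Module.Dual ℝ L | ∃ X : L, g = ℓ + coad X ℓ} ∩
        (Submodule.span ℝ
          ((Set.range fun i : Fin d => B.dualBasis (zI i)) ∪
            (Set.range fun i : Fin d => B.dualBasis (yeI i))) : Set (Module.Dual ℝ L))
      = {(∑ i : Fin d, ℓ (B (zI i)) • B.dualBasis (zI i))
          + (∑ j : Fin d, if hj : (j : ℕ) < d - 1 then
              (ℓ (B (yeI j))
                - ℓ (B (zI ⟨(j : ℕ) + 1, by omega⟩)) / ℓ (B (zI ⟨0, by omega⟩))
                    * ℓ (B (yoI j))) • B.dualBasis (yeI j)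
            else 0)
          + (ℓ (B (yeI ⟨d - 1, by omega⟩))
              - (∑ m ∈ Finset.univ.filter (fun m : Fin d => 0 < (m : ℕ)), ℓ (B (zI m)))
                  / ℓ (B (zI ⟨0, by omega⟩)) * ℓ (B (yoI ⟨d - 1, by omega⟩)))
              • B.dualBasis (yeI ⟨d - 1, by omega⟩)} := by
  rw [add_assoc, Fin.sum_dite_lt_pred_add (by omega)
      (fun j => crossSectionCoords hd (coords B ℓ) (yeI j) • B.dualBasis (yeI j)) _ ?summand _ ?last,
    ← sum_smul_dualBasis_crossSectionCoords]
  case summand =>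
    intro j hj
    simp [crossSectionCoords, gdW, hj, coords, yeI]
  case last => simp [crossSectionCoords, gdW, coords, yeI]
  ext g
  simp only [Set.mem_inter_iff, Set.mem_ofPred_eq, SetLike.mem_coe, Set.mem_singleton_iff,
    mem_span_dualBasis_zI_yeI_iff, B.eq_sum_smul_dualBasis_iff]
  constructor
  · rintro ⟨⟨X, rfl⟩, hX⟩
    exact add_coad_apply_eq_crossSectionCoords hd B hbr hℓ hX
  · intro hg
    obtain ⟨X, hX⟩ := exists_add_coad_apply_eq_crossSectionCoords hd B hbr hℓ
    exact ⟨⟨X, B.ext fun a => (hg a).trans (hX a).symm⟩, fun i => ⟨hg _, hg _⟩⟩
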